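/- arXiv:2508.12012 — 3 statements merged into one kernel-verified Lean document; each statement's English description precedes it below -/
import Mathlib

section
/- Let $\Gamma_c$ be a nonnegative random variable with CDF $F(y) = 1 - e^{-C_1 y}(1 + C_2 y)^{-D}$ for $y \ge 0$, where $C_1, C_2 > 0$ and $D$ is a positive integer. Then $\mathbb{E}[\Gamma_c] = \frac{e^{C_1/C_2}}{C_2} E_D(C_1/C_2)$, where $E_D(x) = \int_1^\infty e^{-tx} t^{-D}\,dt$ is the generalized exponential integral. -/
open MeasureTheory ProbabilityTheory Real Set

/-
Writing the mean of a nonnegative random variable as the integral of its tail,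
`𝔼[X] = ∫₀^∞ e^{-C₁y}(1 + C₂y)^{-D} dy`, the affine substitution `t = 1 + C₂y` turns the
integrand into `e^{C₁/C₂} e^{-t C₁/C₂} t^{-D}` over `t > 1`, with Jacobian `1/C₂`.
-/

section IoiChangeVariables

variable {E : Type*} [NormedAddCommGroup E] [NormedSpace ℝ E]

theorem integral_comp_add_right_Ioi (g : ℝ → E) (a d : ℝ) :
    ∫ x in Ioi a, g (x + d) = ∫ x in Ioi (a + d), g x := by
  simpa [preimage_add_const_Ioi] using
    (measurePreserving_add_right volume d).setIntegral_preimage_emb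
      (measurableEmbedding_addRight d) g (Ioi (a + d))

theorem integral_comp_mul_add_Ioi (g : ℝ → E) (a : ℝ) {b : ℝ} (hb : 0 < b) (d : ℝ) :
    ∫ x in Ioi a, g (b * x + d) = b⁻¹ • ∫ x in Ioi (b * a + d), g x := by
  rw [integral_comp_mul_left_Ioi (fun x => g (x + d)) a hb, integral_comp_add_right_Ioi]

end IoiChangeVariables

theorem integral_eq_setIntegral_one_sub_measureReal_le {Ω : Type*} [MeasurableSpace Ω]
    {μ : Measure Ω} [IsProbabilityMeasure μ] {X : Ω → ℝ} (hm : Measurable X)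
    (hnonneg : ∀ ω, 0 ≤ X ω) (hint : Integrable X μ) :
    ∫ ω, X ω ∂μ = ∫ y in Ioi 0, (1 - μ.real {ω | X ω ≤ y}) := by
  rw [hint.integral_eq_integral_meas_lt (ae_of_all _ hnonneg)]
  congr with y
  rw [← probReal_compl_eq_one_sub (measurableSet_le hm measurable_const)]
  simp only [compl_ofPred, not_le]

theorem integral_Ioi_exp_neg_mul_mul_one_add_mul_rpow (a : ℝ) {b : ℝ} (hb : 0 < b) (v : ℝ) :
    ∫ y in Ioi 0, exp (-a * y) * (1 + b * y) ^ (-v)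
      = exp (a / b) / b * ∫ t in Ioi 1, exp (-t * (a / b)) * t ^ (-v) := by
  have h_integrand : ∀ y : ℝ, exp (-a * y) * (1 + b * y) ^ (-v)
      = exp (a / b) * (exp (-(b * y + 1) * (a / b)) * (b * y + 1) ^ (-v)) := by
    intro y
    rw [← mul_assoc, ← exp_add, add_comm 1]
    congr 2
    field_simp
    ring
  simp_rw [h_integrand]
  rw [integral_const_mul, integral_comp_mul_add_Ioi (fun t => exp (-t * (a / b)) * t ^ (-v)) 0 hb,
    mul_zero, zero_add, smul_eq_mul]
  ring

theorem mean_sinr_common_general {Ω : Type*} [MeasureSpace Ω] [IsProbabilityMeasure (ℙ : Measure Ω)]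
    (X : Ω → ℝ) (hm : Measurable X) (hnonneg : ∀ ω, 0 ≤ X ω) (hint : Integrable X ℙ)
    (C₁ C₂ : ℝ) (D : ℕ) (hC₂ : 0 < C₂)
    (hcdf : ∀ y : ℝ, 0 ≤ y →
      ((ℙ : Measure Ω) {ω | X ω ≤ y}).toReal = 1 - Real.exp (-C₁ * y) * (1 + C₂ * y) ^ (-(D : ℝ))) :
    ∫ ω, X ω ∂ℙ = Real.exp (C₁ / C₂) / C₂
        * ∫ t in Set.Ioi (1 : ℝ), Real.exp (-t * (C₁ / C₂)) * t ^ (-(D : ℝ)) := by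
  rw [integral_eq_setIntegral_one_sub_measureReal_le hm hnonneg hint,
    ← integral_Ioi_exp_neg_mul_mul_one_add_mul_rpow C₁ hC₂]
  refine setIntegral_congr_fun measurableSet_Ioi fun y hy => ?_
  rw [measureReal_def, hcdf y (le_of_lt hy), sub_sub_cancel]

/-- If a nonnegative random variable `Γc` has CDF `F(y) = 1 - e^{-C₁y}(1+C₂y)^{-D}` for
`y ≥ 0`, with `C₁, C₂ > 0` and `D` a positive integer, then
`𝔼[Γc] = (e^{C₁/C₂}/C₂) · E_D(C₁/C₂)` where `E_D(x) = ∫₁^∞ e^{-tx} t^{-D} dt`. -/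
theorem mean_sinr_common {Ω : Type*} [MeasureSpace Ω] [IsProbabilityMeasure (ℙ : Measure Ω)]
    (X : Ω → ℝ) (hm : Measurable X) (hnonneg : ∀ ω, 0 ≤ X ω) (hint : Integrable X ℙ)
    (C₁ C₂ : ℝ) (D : ℕ) (hC₁ : 0 < C₁) (hC₂ : 0 < C₂) (hD : 0 < D)
    (hcdf : ∀ y : ℝ, 0 ≤ y →
      ((ℙ : Measure Ω) {ω | X ω ≤ y}).toReal = 1 - Real.exp (-C₁ * y) * (1 + C₂ * y) ^ (-(D : ℝ))) :
    ∫ ω, X ω ∂ℙ = Real.exp (C₁ / C₂) / C₂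
        * ∫ t in Set.Ioi (1 : ℝ), Real.exp (-t * (C₁ / C₂)) * t ^ (-(D : ℝ)) :=
  mean_sinr_common_general X hm hnonneg hint C₁ C₂ D hC₂ hcdf
end

section
/- For $C_1, C_2 > 0$ and positive integer $n$, define $\Psi(n) = \frac{e^{(C_1/C_2)(C_2-1)}}{(1-C_2)^n} E_1(C_1) - \sum_{i=1}^n \frac{E_i(C_1/C_2)}{(1-C_2)^{n+1-i}}$ where $E_v(x) = \int_1^\infty e^{-tx}t^{-v}dt$, and assume $C_2 \ne 1$. Then for a nonnegative random variable $\Gamma$ with CDF $F(y) = 1 - e^{-C_1 y}(1+C_2 y)^{-n}$ one has $\mathbb{E}[\ln(1+\Gamma)] = e^{C_1/C_2}\,\Psi(n)\cdot \ln 2 \cdot \frac{1}{\ln 2}$, i.e., $\mathbb{E}[\log_2(1+\Gamma)] = \frac{e^{C_1/C_2}}{\ln 2}\Psi(n)$. -/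
open MeasureTheory ProbabilityTheory Real Finset

/-!
By the layer-cake formula, `𝔼[ln(1+Γ)] = ∫₀^∞ ℙ(Γ > t)/(1+t) dt`, and here
`ℙ(Γ > t) = e^{-C₁t}(1+C₂t)^{-n}`. Since `(1+C₂t) - C₂(1+t) = 1 - C₂ ≠ 0`, partial fractions split
`1/((1+t)(1+C₂t)ⁿ)` into a multiple of `1/(1+t)` and multiples of `(1+C₂t)^{-i}`, `1 ≤ i ≤ n`.
The substitution `s = 1 + ct` turns each `∫₀^∞ e^{-at}(1+ct)^{-v} dt` into `c⁻¹ e^{a/c} E_v(a/c)`.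
-/

theorem inv_mul_pow_eq_sub_sum {K : Type*} [Field K] {x y c d : K} (hx : x ≠ 0) (hy : y ≠ 0)
    (hd : d ≠ 0) (hxy : y - c * x = d) (n : ℕ) :
    (x * y ^ n)⁻¹ = (d ^ n * x)⁻¹ - ∑ i ∈ Icc 1 n, c / (d ^ (n + 1 - i) * y ^ i) := by
  induction n with
  | zero => simp
  | succ n ih =>
    have hsum : ∑ i ∈ Icc 1 (n + 1), c / (d ^ (n + 1 + 1 - i) * y ^ i)
        = (∑ i ∈ Icc 1 n, c / (d ^ (n + 1 - i) * y ^ i)) / d + c / (d * y ^ (n + 1)) := by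
      rw [sum_Icc_succ_top (by omega), sum_div, show n + 1 + 1 - (n + 1) = 1 by omega, pow_one]
      congr 1
      refine sum_congr rfl fun i hi => ?_
      rw [show n + 1 + 1 - i = n + 1 - i + 1 by grind, pow_succ]
      field_simp
    have ih' : ∑ i ∈ Icc 1 n, c / (d ^ (n + 1 - i) * y ^ i) = (d ^ n * x)⁻¹ - (x * y ^ n)⁻¹ := by
      rw [ih]
      ring
    rw [hsum, ih']
    field_simp
    linear_combination (-(d ^ (n + 1) * d ^ n * y ^ n)) * hxy

theorem integral_inv_one_add {x : ℝ} (hx : -1 < x) :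
    ∫ s in (0 : ℝ)..x, (1 + s)⁻¹ = log (1 + x) := by
  rw [intervalIntegral.integral_comp_add_left (fun u => u⁻¹) 1, add_zero, integral_inv, div_one]
  rcases le_total 1 (1 + x) with h | h
  · rw [Set.uIcc_of_le h]
    exact fun h0 => by linarith [h0.1]
  · rw [Set.uIcc_of_ge h]
    exact fun h0 => by linarith [h0.1]

section Tail

variable {Ω : Type*} [MeasurableSpace Ω] {μ : Measure Ω} {X : Ω → ℝ}

theorem measureReal_lt_eq_one_sub [IsProbabilityMeasure μ] (hX : AEMeasurable X μ) (t : ℝ) :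
    μ.real {ω | t < X ω} = 1 - μ.real {ω | X ω ≤ t} := by
  rw [← probReal_compl_eq_one_sub₀ (s := {ω | X ω ≤ t}) (hX.nullMeasurable measurableSet_Iic)]
  congr 1
  ext ω
  simp

/-- Both sides are the real parts of one and the same lintegral, so no integrability is needed:
when it is infinite, both sides are `0`. -/
theorem integral_log_one_add_eq_integral_measureReal_lt [IsFiniteMeasure μ]
    (hX : AEMeasurable X μ) (h0 : 0 ≤ᵐ[μ] X) :
    ∫ ω, log (1 + X ω) ∂μ = ∫ t in Set.Ioi 0, μ.real {ω | t < X ω} / (1 + t) := by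
  have htail : Measurable fun t => μ.real {ω | t < X ω} :=
    Antitone.measurable fun s t hst => measureReal_mono fun ω (h : t < X ω) => hst.trans_lt h
  rw [integral_eq_lintegral_of_nonneg_ae
      (h0.mono fun ω (h : 0 ≤ X ω) => log_nonneg (by linarith))
      (measurable_log.comp_aemeasurable (hX.const_add 1)).aestronglyMeasurable,
    integral_eq_lintegral_of_nonneg_ae (f := fun t => μ.real {ω | t < X ω} / (1 + t))
      (ae_restrict_of_forall_mem measurableSet_Ioi fun t (ht : 0 < t) =>
        div_nonneg measureReal_nonneg (by linarith))
      (htail.div (measurable_const.add measurable_id) :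
        Measurable fun t => μ.real {ω | t < X ω} / (1 + t)).aestronglyMeasurable]
  congr 1
  calc ∫⁻ ω, ENNReal.ofReal (log (1 + X ω)) ∂μ
      = ∫⁻ ω, ENNReal.ofReal (∫ s in (0 : ℝ)..X ω, (1 + s)⁻¹) ∂μ :=
        lintegral_congr_ae (h0.mono fun ω (h : 0 ≤ X ω) =>
          congrArg ENNReal.ofReal (integral_inv_one_add (by linarith)).symm)
    _ = ∫⁻ t in Set.Ioi 0, μ {ω | t < X ω} * ENNReal.ofReal (1 + t)⁻¹ := by
        refine lintegral_comp_eq_lintegral_meas_lt_mul μ h0 hX (fun t ht => ?_)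
          (ae_restrict_of_forall_mem measurableSet_Ioi fun t (ht : 0 < t) => by positivity)
        refine ((continuous_const.add continuous_id).continuousOn.inv₀ fun s hs => ?_)
          |>.intervalIntegrable
        rw [Set.uIcc_of_le ht.le] at hs
        exact (one_pos.trans_le (le_add_of_nonneg_right hs.1)).ne'
    _ = _ := by
        refine setLIntegral_congr_fun measurableSet_Ioi fun t ht => ?_
        rw [div_eq_mul_inv, ENNReal.ofReal_mul measureReal_nonneg, ofReal_measureReal]

end Tail

noncomputable def expIntegralE (v x : ℝ) : ℝ :=
  ∫ t in Set.Ioi (1 : ℝ), exp (-t * x) * t ^ (-v)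

theorem integral_comp_add_mul_Ioi {E : Type*} [NormedAddCommGroup E] [NormedSpace ℝ E]
    (g : ℝ → E) (a d : ℝ) {c : ℝ} (hc : 0 < c) :
    ∫ x in Set.Ioi a, g (d + c * x) = c⁻¹ • ∫ s in Set.Ioi (d + c * a), g s := by
  rw [integral_comp_mul_left_Ioi (fun y => g (d + y)) a hc]
  congr 1
  simpa using (measurePreserving_add_left volume d).setIntegral_preimage_emb
    (measurableEmbedding_addLeft d) g (Set.Ioi (d + c * a))

theorem integrableOn_exp_mul_one_add_mul_rpow_neg {a c v : ℝ} (ha : 0 < a) (hc : 0 ≤ c)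
    (hv : 0 ≤ v) :
    IntegrableOn (fun t => exp (-a * t) * (1 + c * t) ^ (-v)) (Set.Ioi 0) := by
  refine (exp_neg_integrableOn_Ioi 0 ha).mono' (by fun_prop) ?_
  filter_upwards [ae_restrict_mem measurableSet_Ioi] with t (ht : 0 < t)
  have hct : 1 ≤ 1 + c * t := le_add_of_nonneg_right (mul_nonneg hc ht.le)
  rw [norm_mul, norm_of_nonneg (exp_pos _).le, norm_of_nonneg (rpow_nonneg (by linarith) _)]
  exact mul_le_of_le_one_right (exp_pos _).le
    (rpow_le_one_of_one_le_of_nonpos hct (neg_nonpos.2 hv))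

theorem integral_exp_mul_one_add_mul_rpow_neg (a v : ℝ) {c : ℝ} (hc : 0 < c) :
    ∫ t in Set.Ioi 0, exp (-a * t) * (1 + c * t) ^ (-v)
      = c⁻¹ * exp (a / c) * expIntegralE v (a / c) := by
  have hfactor : ∀ t, exp (-a * t) * (1 + c * t) ^ (-v)
      = exp (a / c) * (exp (-(1 + c * t) * (a / c)) * (1 + c * t) ^ (-v)) := fun t => by
    rw [← mul_assoc, ← exp_add]
    congr 2
    field_simp
    ring
  simp_rw [hfactor, integral_const_mul,
    integral_comp_add_mul_Ioi (fun s => exp (-s * (a / c)) * s ^ (-v)) 0 1 hc, expIntegralE]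
  simp only [mul_zero, add_zero, smul_eq_mul]
  ring

theorem integral_exp_mul_rpow_div_one_add {a c : ℝ} (ha : 0 < a) (hc : 0 < c) (hc1 : c ≠ 1)
    (n : ℕ) :
    ∫ t in Set.Ioi 0, exp (-a * t) * (1 + c * t) ^ (-(n : ℝ)) / (1 + t)
      = exp a * expIntegralE 1 a / (1 - c) ^ n
        - exp (a / c) * ∑ i ∈ Icc 1 n, expIntegralE i (a / c) / (1 - c) ^ (n + 1 - i) := by
  have hsplit : Set.EqOn (fun t => exp (-a * t) * (1 + c * t) ^ (-(n : ℝ)) / (1 + t))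
      (fun t => ((1 - c) ^ n)⁻¹ * (exp (-a * t) * (1 + 1 * t) ^ (-(1 : ℝ)))
        - ∑ i ∈ Icc 1 n, c / (1 - c) ^ (n + 1 - i) * (exp (-a * t) * (1 + c * t) ^ (-(i : ℝ))))
      (Set.Ioi 0) := fun t (ht : 0 < t) => by
    have h1 : 0 < 1 + t := by linarith
    have hct : 0 < 1 + c * t := by positivity
    simp only [one_mul, rpow_neg h1.le, rpow_neg hct.le, rpow_natCast, rpow_one]
    rw [div_eq_mul_inv, mul_assoc, ← mul_inv, mul_comm _ (1 + t),
      inv_mul_pow_eq_sub_sum h1.ne' hct.ne' (sub_ne_zero.2 hc1.symm) (by ring) n, mul_sub, mul_sum]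
    congr 1
    · rw [mul_inv]
      ring
    · exact sum_congr rfl fun i _ => by ring
  have hintegrable : ∀ v : ℝ, 0 ≤ v → ∀ b : ℝ, 0 ≤ b →
      IntegrableOn (fun t => exp (-a * t) * (1 + b * t) ^ (-v)) (Set.Ioi 0) :=
    fun v hv b hb => integrableOn_exp_mul_one_add_mul_rpow_neg ha hb hv
  rw [setIntegral_congr_fun measurableSet_Ioi hsplit,
    integral_sub ((hintegrable 1 zero_le_one 1 zero_le_one).const_mul _)
      (integrable_finsetSum _ fun (i : ℕ) _ => (hintegrable i i.cast_nonneg c hc.le).const_mul _),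
    integral_finsetSum _ fun (i : ℕ) _ => (hintegrable i i.cast_nonneg c hc.le).const_mul _,
    integral_const_mul, integral_exp_mul_one_add_mul_rpow_neg _ _ one_pos]
  simp only [integral_const_mul, integral_exp_mul_one_add_mul_rpow_neg _ _ hc, inv_one, one_mul,
    div_one, mul_sum]
  congr 1
  · ring
  · exact sum_congr rfl fun i _ => by field_simp

theorem ergodic_capacity_common_closed_form_general {Ω : Type*} [MeasureSpace Ω]
    [IsProbabilityMeasure (ℙ : Measure Ω)]
    (C₁ C₂ : ℝ) (n : ℕ) (hC₁ : 0 < C₁) (hC₂ : 0 < C₂) (hne : C₂ ≠ 1)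
    (Γ : Ω → ℝ) (hm : Measurable Γ) (hnonneg : ∀ ω, 0 ≤ Γ ω)
    (hcdf : ∀ y : ℝ, 0 ≤ y →
      ((ℙ : Measure Ω) {ω | Γ ω ≤ y}).toReal
        = 1 - Real.exp (-C₁ * y) * (1 + C₂ * y) ^ (-(n : ℝ))) :
    let Ev : ℝ → ℝ → ℝ := fun v x => ∫ t in Set.Ioi (1 : ℝ), Real.exp (-t * x) * t ^ (-v)
    let Ψ : ℕ → ℝ := fun m =>
      Real.exp ((C₁ / C₂) * (C₂ - 1)) / (1 - C₂) ^ m * Ev 1 C₁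
        - ∑ i ∈ Finset.Icc 1 m, Ev (i : ℝ) (C₁ / C₂) / (1 - C₂) ^ (m + 1 - i)
    (∫ ω, Real.logb 2 (1 + Γ ω) ∂ℙ) = Real.exp (C₁ / C₂) / Real.log 2 * Ψ n := by
  intro Ev Ψ
  have hlog : ∫ ω, log (1 + Γ ω)
      = ∫ t in Set.Ioi 0, exp (-C₁ * t) * (1 + C₂ * t) ^ (-(n : ℝ)) / (1 + t) := by
    rw [integral_log_one_add_eq_integral_measureReal_lt hm.aemeasurable (ae_of_all _ hnonneg)]
    refine setIntegral_congr_fun measurableSet_Ioi fun t (ht : 0 < t) => ?_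
    rw [measureReal_lt_eq_one_sub hm.aemeasurable, measureReal_def, hcdf t ht.le, sub_sub_cancel]
  have hexp : exp C₁ = exp (C₁ / C₂) * exp ((C₁ / C₂) * (C₂ - 1)) := by
    rw [← exp_add]
    congr 1
    field_simp
    ring
  calc ∫ ω, logb 2 (1 + Γ ω) = (∫ ω, log (1 + Γ ω)) / log 2 := integral_div _ _
    _ = _ := by
      rw [hlog, integral_exp_mul_rpow_div_one_add hC₁ hC₂ hne, hexp]
      simp only [Ψ, Ev, expIntegralE]
      ring

/-- Lemma 4 / Eq. (23): for a nonnegative random variable `Γ` with CDF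
`F(y) = 1 - e^{-C₁y}(1+C₂y)^{-n}`, `C₁, C₂ > 0`, `C₂ ≠ 1`, `n` a positive integer,
`𝔼[log₂(1+Γ)] = (e^{C₁/C₂}/ln 2) Ψ(n)` with
`Ψ(n) = e^{(C₁/C₂)(C₂-1)}/(1-C₂)ⁿ · E₁(C₁) - ∑_{i=1}^n E_i(C₁/C₂)/(1-C₂)^{n+1-i}`,
where `E_v(x) = ∫₁^∞ e^{-tx} t^{-v} dt`. -/
theorem ergodic_capacity_common_closed_form {Ω : Type*} [MeasureSpace Ω]
    [IsProbabilityMeasure (ℙ : Measure Ω)]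
    (C₁ C₂ : ℝ) (n : ℕ) (hC₁ : 0 < C₁) (hC₂ : 0 < C₂) (hn : 0 < n) (hne : C₂ ≠ 1)
    (Γ : Ω → ℝ) (hm : Measurable Γ) (hnonneg : ∀ ω, 0 ≤ Γ ω)
    (hint : Integrable (fun ω => Real.logb 2 (1 + Γ ω)) ℙ)
    (hcdf : ∀ y : ℝ, 0 ≤ y →
      ((ℙ : Measure Ω) {ω | Γ ω ≤ y}).toReal
        = 1 - Real.exp (-C₁ * y) * (1 + C₂ * y) ^ (-(n : ℝ))) :
    let Ev : ℝ → ℝ → ℝ := fun v x => ∫ t in Set.Ioi (1 : ℝ), Real.exp (-t * x) * t ^ (-v)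
    let Ψ : ℕ → ℝ := fun m =>
      Real.exp ((C₁ / C₂) * (C₂ - 1)) / (1 - C₂) ^ m * Ev 1 C₁
        - ∑ i ∈ Finset.Icc 1 m, Ev (i : ℝ) (C₁ / C₂) / (1 - C₂) ^ (m + 1 - i)
    (∫ ω, Real.logb 2 (1 + Γ ω) ∂ℙ) = Real.exp (C₁ / C₂) / Real.log 2 * Ψ n :=
  ergodic_capacity_common_closed_form_general C₁ C₂ n hC₁ hC₂ hne Γ hm hnonneg hcdf
end

section
/- Let $R_c \ge 0$ and $R_1 \le R_2 \le \dots \le R_K$ be given rates. Define the water-filling allocation: let $j^*$ be the largest index $j \le K$ such that with level $L_j = (R_c + \sum_{i=1}^j R_i)/j$ one has $R_j \le L_j$, and set $C_k = \max(L_{j^*} - R_k, 0)$. Then $\sum_{k=1}^K C_k = R_c$, each $C_k \ge 0$, and this allocation maximizes $\min_k (C_k + R_k)$ over all nonnegative allocations with $\sum_k C_k = R_c$. -/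
/-!
Any allocation `C'` whose rates `C' k + R k` all exceed `max L (min R)` must dominate the
water-filling allocation `max (L - R k) 0` pointwise, and strictly at a minimiser of
`C k + R k`, so it would spend more than `Rc`; this needs no ordering of the rates.
Sortedness and the maximality of `j*` are only needed to see that the level `L_{j*}` spends
exactly `Rc`: all users `k ≤ j*` lie below it, and since `j* + 1` fails the test,
`L_{j*+1} < R (j*+1)`; as `L_{j*+1}` is a weighted average of `L_{j*}` and `R (j*+1)`,
this puts `R (j*+1)`, hence every later user, above `L_{j*}`.
-/

open Finset

noncomputable section

def waterfill {ι : Type*} (L : ℝ) (R : ι → ℝ) (k : ι) : ℝ := max (L - R k) 0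

theorem inf'_add_le_inf'_waterfill {ι : Type*} {s : Finset ι} (hs : s.Nonempty)
    (R C : ι → ℝ) (L : ℝ) (hC : ∀ k ∈ s, 0 ≤ C k)
    (hsum : ∑ k ∈ s, C k = ∑ k ∈ s, waterfill L R k) :
    s.inf' hs (fun k => C k + R k) ≤ s.inf' hs (fun k => waterfill L R k + R k) := by
  by_contra! hlt
  set m := s.inf' hs (fun k => C k + R k)
  obtain ⟨k₀, hk₀, hk₀m⟩ := (inf'_lt_iff hs).1 hlt
  have hL : L ≤ waterfill L R k₀ + R k₀ := by
    linarith [le_max_left (L - R k₀) 0, show waterfill L R k₀ = max (L - R k₀) 0 from rfl]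
  have hCm : ∀ k ∈ s, m - R k ≤ C k := fun k hk =>
    sub_le_iff_le_add.2 (inf'_le (fun k => C k + R k) hk)
  have hle : ∀ k ∈ s, waterfill L R k ≤ C k := fun k hk =>
    max_le (by linarith [hCm k hk]) (hC k hk)
  have hlt₀ : waterfill L R k₀ < C k₀ := by linarith [hCm k₀ hk₀]
  exact (sum_lt_sum hle ⟨k₀, hk₀, hlt₀⟩).ne' hsum

/-- The level `L_j` at which users `0, …, j` would reach equal total rates by sharing `Rc`. -/
def waterLevel (R : ℕ → ℝ) (Rc : ℝ) (j : ℕ) : ℝ :=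
  (Rc + ∑ i ∈ range (j + 1), R i) / ((j : ℝ) + 1)

theorem mul_waterLevel (R : ℕ → ℝ) (Rc : ℝ) (j : ℕ) :
    ((j : ℝ) + 1) * waterLevel R Rc j = Rc + ∑ i ∈ range (j + 1), R i := by
  unfold waterLevel
  field_simp

theorem waterLevel_lt_of_waterLevel_succ_lt {R : ℕ → ℝ} {Rc : ℝ} {j : ℕ}
    (h : waterLevel R Rc (j + 1) < R (j + 1)) : waterLevel R Rc j < R (j + 1) := by
  have hj := mul_waterLevel R Rc j
  have hsucc := mul_waterLevel R Rc (j + 1)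
  rw [sum_range_succ] at hsucc
  push_cast at hsucc
  nlinarith

theorem sum_waterfill_waterLevel {K j : ℕ} {R : ℕ → ℝ} {Rc : ℝ}
    (hsorted : ∀ i j : ℕ, i ≤ j → j < K → R i ≤ R j) (hj : j < K)
    (hRj : R j ≤ waterLevel R Rc j)
    (hnext : j + 1 < K → waterLevel R Rc (j + 1) < R (j + 1)) :
    ∑ k ∈ range K, waterfill (waterLevel R Rc j) R k = Rc := by
  set L := waterLevel R Rc j
  have hbelow : ∀ k ∈ range (j + 1), waterfill L R k = L - R k := fun k hk =>
    max_eq_left <| sub_nonneg.2 <|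
      (hsorted k j (Nat.lt_succ_iff.1 (mem_range.1 hk)) hj).trans hRj
  have habove : ∀ k ∈ Ico (j + 1) K, waterfill L R k = 0 := by
    intro k hk
    obtain ⟨hjk, hkK⟩ := mem_Ico.1 hk
    have hL := waterLevel_lt_of_waterLevel_succ_lt (hnext (hjk.trans_lt hkK))
    exact max_eq_right (by linarith [hsorted (j + 1) k hjk hkK])
  rw [← sum_range_add_sum_Ico _ hj, sum_congr rfl hbelow, sum_eq_zero habove, add_zero,
    sum_sub_distrib, sum_const, card_range, nsmul_eq_mul]
  push_cast
  linarith [mul_waterLevel R Rc j]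

end

theorem waterfilling_maximizes_min_rate_general (K : ℕ) (hK : 0 < K) (R : ℕ → ℝ)
    (hsorted : ∀ i j : ℕ, i ≤ j → j < K → R i ≤ R j)
    (Rc : ℝ) (hRc : 0 ≤ Rc) :
    let S := (Finset.range K).filter
      (fun j => R j ≤ (Rc + ∑ i ∈ Finset.range (j + 1), R i) / ((j : ℝ) + 1))
    let jstar := S.sup id
    let L := (Rc + ∑ i ∈ Finset.range (jstar + 1), R i) / ((jstar : ℝ) + 1)
    let C : ℕ → ℝ := fun k => max (L - R k) 0
    (∑ k ∈ Finset.range K, C k = Rc) ∧ (∀ k, 0 ≤ C k) ∧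
      ∀ C' : ℕ → ℝ, (∀ k, k < K → 0 ≤ C' k) → (∑ k ∈ Finset.range K, C' k = Rc) →
        (Finset.range K).inf' (Finset.nonempty_range_iff.mpr hK.ne')
            (fun k => C' k + R k)
          ≤ (Finset.range K).inf' (Finset.nonempty_range_iff.mpr hK.ne')
            (fun k => C k + R k) := by
  intro S jstar L C
  have hzero : 0 ∈ S := mem_filter.2 ⟨mem_range.2 hK, by simpa using hRc⟩
  have hjstar : jstar ∈ S := by simpa using sup_mem_of_nonempty (f := id) ⟨0, hzero⟩
  have hnext : jstar + 1 < K → waterLevel R Rc (jstar + 1) < R (jstar + 1) := fun h =>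
    not_le.1 fun hle =>
      (le_sup (f := id) (mem_filter.2 ⟨mem_range.2 h, hle⟩)).not_gt jstar.lt_succ_self
  have hsum : ∑ k ∈ range K, C k = Rc :=
    sum_waterfill_waterLevel hsorted (mem_range.1 (mem_filter.1 hjstar).1)
      (mem_filter.1 hjstar).2 hnext
  exact ⟨hsum, fun k => le_max_right _ _, fun C' hC' hC'sum =>
    inf'_add_le_inf'_waterfill _ R C' L (fun k hk => hC' k (mem_range.1 hk))
      (hC'sum.trans hsum.symm)⟩

/-- Water-filling solves the max-min common-rate-splitting problem `𝒫₃`: with sorted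
rates `R 0 ≤ R 1 ≤ … ≤ R (K-1)` and total common rate `Rc ≥ 0`, taking the largest
`j < K` with `R j ≤ L_j := (Rc + ∑_{i≤j} R i)/(j+1)`, and setting
`C k = max (L_{j*} - R k) 0`, the allocation sums to `Rc`, is nonnegative, and maximizes
`min_k (C k + R k)` over all nonnegative allocations summing to `Rc`. -/
theorem waterfilling_maximizes_min_rate (K : ℕ) (hK : 0 < K) (R : ℕ → ℝ)
    (hsorted : ∀ i j : ℕ, i ≤ j → j < K → R i ≤ R j) (hR : ∀ k, 0 ≤ R k)
    (Rc : ℝ) (hRc : 0 ≤ Rc) :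
    let S := (Finset.range K).filter
      (fun j => R j ≤ (Rc + ∑ i ∈ Finset.range (j + 1), R i) / ((j : ℝ) + 1))
    let jstar := S.sup id
    let L := (Rc + ∑ i ∈ Finset.range (jstar + 1), R i) / ((jstar : ℝ) + 1)
    let C : ℕ → ℝ := fun k => max (L - R k) 0
    (∑ k ∈ Finset.range K, C k = Rc) ∧ (∀ k, 0 ≤ C k) ∧
      ∀ C' : ℕ → ℝ, (∀ k, k < K → 0 ≤ C' k) → (∑ k ∈ Finset.range K, C' k = Rc) →
        (Finset.range K).inf' (Finset.nonempty_range_iff.mpr hK.ne')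
            (fun k => C' k + R k)
          ≤ (Finset.range K).inf' (Finset.nonempty_range_iff.mpr hK.ne')
            (fun k => C k + R k) :=
  waterfilling_maximizes_min_rate_general K hK R hsorted Rc hRc
end
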